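/- Let $\hat\Sigma \in \mathbb{S}^n_{++}$, $S \in \mathbb{S}^n_+$ and $\rho \ge 0$. The function $L(\Sigma) = \mathrm{Tr}(S\Sigma^{-1}) + \log\det\Sigma$ attains its minimum over the Fisher-Rao ball $\mathcal{B} = \{\Sigma \in \mathbb{S}^n_{++} : \frac{1}{\sqrt 2}\|\log(\hat\Sigma^{-1/2}\Sigma\hat\Sigma^{-1/2})\|_F \le \rho\}$; in particular, the minimum is finite and achieved at some $\Sigma^\star \in \mathcal{B}$. -/

import Mathlib

open Matrix

variable {n : ℕ}

/-- Apply a real function spectrally to a (hermitian) matrix. -/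
noncomputable def matFun (f : ℝ → ℝ) (A : Matrix (Fin n) (Fin n) ℝ) :
    Matrix (Fin n) (Fin n) ℝ :=
  if h : A.IsHermitian then
    (h.eigenvectorUnitary : Matrix (Fin n) (Fin n) ℝ) *
      Matrix.diagonal (fun i => f (h.eigenvalues i)) *
      star (h.eigenvectorUnitary : Matrix (Fin n) (Fin n) ℝ)
  else 0

/-- Matrix logarithm (spectral). -/
noncomputable def matLog (A : Matrix (Fin n) (Fin n) ℝ) : Matrix (Fin n) (Fin n) ℝ :=
  matFun Real.log A

/-- Matrix real power (spectral). -/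
noncomputable def matPow (A : Matrix (Fin n) (Fin n) ℝ) (t : ℝ) : Matrix (Fin n) (Fin n) ℝ :=
  matFun (fun x => x ^ t) A

/-- The unique positive semidefinite square root (spectral). -/
noncomputable def matSqrt (A : Matrix (Fin n) (Fin n) ℝ) : Matrix (Fin n) (Fin n) ℝ :=
  matFun Real.sqrt A

/-- Frobenius norm. -/
noncomputable def frob (A : Matrix (Fin n) (Fin n) ℝ) : ℝ :=
  Real.sqrt (∑ i, ∑ j, (A i j) ^ 2)

/-- Fisher-Rao distance between positive definite matrices. -/
noncomputable def FRdist (A B : Matrix (Fin n) (Fin n) ℝ) : ℝ :=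
  (1 / Real.sqrt 2) * frob (matLog ((matSqrt B)⁻¹ * A * (matSqrt B)⁻¹))

/-!
With `P = Σ̂^{1/2}`, the map `H ↦ P * exp H * P` sends the symmetric matrices of Frobenius norm
at most `√2 ρ` onto the Fisher–Rao ball, because `P⁻¹ (P e^H P) P⁻¹ = e^H` and `log e^H = H`.
The ball is therefore a continuous image of a compact set, hence compact. It lies in the
positive definite cone, on which `Σ ↦ Tr(S Σ⁻¹) + log det Σ` is continuous, so the minimum is
attained.
-/

open NormedSpace
open scoped MatrixOrder

lemma matFun_eq_cfc {A : Matrix (Fin n) (Fin n) ℝ} (hA : A.IsHermitian) (f : ℝ → ℝ) :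
    matFun f A = cfc f A := by
  rw [matFun, dif_pos hA, hA.cfc_eq, IsHermitian.cfc, Unitary.conjStarAlgAut_apply]
  rfl

lemma isHermitian_matFun (f : ℝ → ℝ) (A : Matrix (Fin n) (Fin n) ℝ) :
    (matFun f A).IsHermitian := by
  by_cases hA : A.IsHermitian
  · rw [matFun_eq_cfc hA]
    exact cfc_predicate f A
  · rw [matFun, dif_neg hA]
    exact isHermitian_zero

lemma posDef_matFun {f : ℝ → ℝ} {A : Matrix (Fin n) (Fin n) ℝ} (hA : A.IsHermitian)
    (hf : ∀ x ∈ spectrum ℝ A, 0 < f x) : (matFun f A).PosDef := by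
  rw [matFun_eq_cfc hA, ← isStrictlyPositive_iff_posDef]
  exact (cfc_isStrictlyPositive_iff f A (A.finite_spectrum.continuousOn f)).mpr hf

lemma posDef_matSqrt {A : Matrix (Fin n) (Fin n) ℝ} (hA : A.PosDef) : (matSqrt A).PosDef :=
  posDef_matFun hA.isHermitian fun _ hx => Real.sqrt_pos.mpr (hA.isStrictlyPositive.spectrum_pos hx)

section

-- `cfc` on matrices uses the product topology; the L2 operator norm induces exactly that topology,
-- which makes the `CFC` lemmas about `exp` applicable.
open scoped Matrix.Norms.L2Operator

lemma exp_eq_matFun {H : Matrix (Fin n) (Fin n) ℝ} (hH : H.IsHermitian) :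
    exp H = matFun Real.exp H := by
  rw [matFun_eq_cfc hH, CFC.real_exp_eq_normedSpace_exp hH]

lemma posDef_exp {H : Matrix (Fin n) (Fin n) ℝ} (hH : H.IsHermitian) : (exp H).PosDef := by
  rw [exp_eq_matFun hH]
  exact posDef_matFun hH fun x _ => Real.exp_pos x

lemma matLog_exp {H : Matrix (Fin n) (Fin n) ℝ} (hH : H.IsHermitian) : matLog (exp H) = H := by
  rw [matLog, matFun_eq_cfc hH.exp]
  exact CFC.log_exp H hH

lemma exp_matLog {M : Matrix (Fin n) (Fin n) ℝ} (hM : M.PosDef) : exp (matLog M) = M := by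
  rw [matLog, matFun_eq_cfc hM.isHermitian]
  exact CFC.exp_log M hM.isStrictlyPositive

lemma continuous_conj_exp (P : Matrix (Fin n) (Fin n) ℝ) :
    Continuous fun H : Matrix (Fin n) (Fin n) ℝ => P * exp H * P := by
  let : NormedAlgebra ℚ (Matrix (Fin n) (Fin n) ℝ) := .restrictScalars ℚ ℝ _
  fun_prop

end

lemma isCompact_isHermitian_frob_le (c : ℝ) :
    IsCompact {H : Matrix (Fin n) (Fin n) ℝ | H.IsHermitian ∧ frob H ≤ c} := by
  let : NormedAddCommGroup (Matrix (Fin n) (Fin n) ℝ) := Matrix.frobeniusNormedAddCommGroup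
  let : NormedSpace ℝ (Matrix (Fin n) (Fin n) ℝ) := Matrix.frobeniusNormedSpace
  have hfrob : ∀ H : Matrix (Fin n) (Fin n) ℝ, frob H = ‖H‖ := fun H => by
    simp [frob, frobenius_norm_def, Real.sqrt_eq_rpow]
  have : {H : Matrix (Fin n) (Fin n) ℝ | H.IsHermitian ∧ frob H ≤ c} =
      {H | H.IsHermitian} ∩ Metric.closedBall 0 c := by
    ext H; simp [hfrob]
  rw [this]
  exact (isCompact_closedBall 0 c).inter_left
    (isClosed_eq continuous_id.matrix_conjTranspose continuous_id)

lemma continuousOn_trace_mul_inv_add_log_det {m : Type*} [Fintype m] [DecidableEq m]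
    (S : Matrix m m ℝ) :
    ContinuousOn (fun X : Matrix m m ℝ => (S * X⁻¹).trace + Real.log X.det)
      {X | X.det ≠ 0} := by
  have hinv : ContinuousOn (fun X : Matrix m m ℝ => X⁻¹) {X | X.det ≠ 0} := fun X hX =>
    (continuousAt_matrix_inv X <| by
      simpa [Ring.inverse_eq_inv'] using continuousAt_inv₀ hX).continuousWithinAt
  exact ((continuous_const.matrix_mul continuous_id).matrix_trace.comp_continuousOn hinv).add
    (continuous_id.matrix_det.continuousOn.log fun _ h => h)

def frBall (Sh : Matrix (Fin n) (Fin n) ℝ) (ρ : ℝ) : Set (Matrix (Fin n) (Fin n) ℝ) :=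
  {Sig | Sig.PosDef ∧ FRdist Sig Sh ≤ ρ}

lemma posDef_conj_exp {P H : Matrix (Fin n) (Fin n) ℝ} (hP : P.PosDef) (hH : H.IsHermitian) :
    (P * exp H * P).PosDef := by
  simpa only [star_eq_conjTranspose, hP.isHermitian.eq] using
    (IsUnit.posDef_star_left_conjugate_iff hP.isUnit).mpr (posDef_exp hH)

lemma frBall_eq_image {Sh : Matrix (Fin n) (Fin n) ℝ} (hSh : Sh.PosDef) (ρ : ℝ) :
    frBall Sh ρ = (fun H => matSqrt Sh * exp H * matSqrt Sh) ''
      {H | H.IsHermitian ∧ frob H ≤ √2 * ρ} := by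
  set P := matSqrt Sh
  have hP : P.PosDef := posDef_matSqrt hSh
  have hPdet : IsUnit P.det := hP.isUnit.map detMonoidHom
  have hFR : ∀ Sig, FRdist Sig Sh ≤ ρ ↔ frob (matLog (P⁻¹ * Sig * P⁻¹)) ≤ √2 * ρ := fun Sig => by
    rw [FRdist, one_div_mul_eq_div, div_le_iff₀' (by positivity)]
  ext Sig
  constructor
  · rintro ⟨hSig, hd⟩
    have hM : (P⁻¹ * Sig * P⁻¹).PosDef := by
      simpa only [star_eq_conjTranspose, conjTranspose_nonsing_inv, hP.isHermitian.eq] using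
        (IsUnit.posDef_star_left_conjugate_iff hP.inv.isUnit).mpr hSig
    refine ⟨matLog (P⁻¹ * Sig * P⁻¹), ⟨isHermitian_matFun _ _, (hFR Sig).mp hd⟩, ?_⟩
    show P * exp (matLog (P⁻¹ * Sig * P⁻¹)) * P = Sig
    rw [exp_matLog hM, ← mul_assoc, mul_nonsing_inv_cancel_left _ _ hPdet,
      nonsing_inv_mul_cancel_right _ _ hPdet]
  · rintro ⟨H, ⟨hH, hHc⟩, rfl⟩
    refine ⟨posDef_conj_exp hP hH, (hFR _).mpr ?_⟩
    simp only [← mul_assoc]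
    rwa [mul_nonsing_inv_cancel_right _ _ hPdet, nonsing_inv_mul _ hPdet, one_mul, matLog_exp hH]

lemma isCompact_frBall {Sh : Matrix (Fin n) (Fin n) ℝ} (hSh : Sh.PosDef) (ρ : ℝ) :
    IsCompact (frBall Sh ρ) := by
  rw [frBall_eq_image hSh]
  exact (isCompact_isHermitian_frob_le _).image (continuous_conj_exp _)

lemma frBall_nonempty {Sh : Matrix (Fin n) (Fin n) ℝ} (hSh : Sh.PosDef) {ρ : ℝ} (hρ : 0 ≤ ρ) :
    (frBall Sh ρ).Nonempty := by
  rw [frBall_eq_image hSh]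
  refine Set.Nonempty.image _ ⟨0, isHermitian_zero, ?_⟩
  simpa [frob] using hρ

theorem fr_optimistic_likelihood_attained_general (Sh S : Matrix (Fin n) (Fin n) ℝ) (ρ : ℝ)
    (hρ : 0 ≤ ρ) (hSh : Sh.PosDef) :
    ∃ Sigs : Matrix (Fin n) (Fin n) ℝ,
      (Sigs.PosDef ∧ FRdist Sigs Sh ≤ ρ) ∧
      ∀ Sig : Matrix (Fin n) (Fin n) ℝ, Sig.PosDef → FRdist Sig Sh ≤ ρ →
        (S * Sigs⁻¹).trace + Real.log Sigs.det ≤ (S * Sig⁻¹).trace + Real.log Sig.det := by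
  obtain ⟨Sigs, hSigs, hmin⟩ := (isCompact_frBall hSh ρ).exists_isMinOn (frBall_nonempty hSh hρ)
    ((continuousOn_trace_mul_inv_add_log_det S).mono fun Sig hSig => hSig.1.det_pos.ne')
  exact ⟨Sigs, hSigs, fun Sig hSig hd => hmin ⟨hSig, hd⟩⟩

theorem fr_optimistic_likelihood_attained (Sh S : Matrix (Fin n) (Fin n) ℝ) (ρ : ℝ)
    (hρ : 0 ≤ ρ) (hSh : Sh.PosDef) (hS : S.PosSemidef) :
    ∃ Sigs : Matrix (Fin n) (Fin n) ℝ,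
      (Sigs.PosDef ∧ FRdist Sigs Sh ≤ ρ) ∧
      ∀ Sig : Matrix (Fin n) (Fin n) ℝ, Sig.PosDef → FRdist Sig Sh ≤ ρ →
        (S * Sigs⁻¹).trace + Real.log Sigs.det ≤ (S * Sig⁻¹).trace + Real.log Sig.det :=
  fr_optimistic_likelihood_attained_general Sh S ρ hρ hSh
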